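/- arXiv:2206.05321 — 4 statements merged into one kernel-verified Lean document; each statement's English description precedes it below -/
import Mathlib

section
/- Let p be a prime number, Z_(p) the localization of the integers at the prime p, let r ≥ 1, and let ℓ_1, …, ℓ_r be prime numbers. Let R = Z_(p)[x_1, …, x_r] and let I ⊆ R be the ideal generated by the element x_1·x_2⋯x_r together with the elements x_i·(x_i + 1 − ℓ_i) for i = 1, …, r. Then the quotient R/I is a free Z_(p)-module of rank 2^r − 1. -/
open MvPolynomial

/-- The span of `p` in `ℤ` is a prime ideal when `p` is prime. -/
instance intSpanPrime (p : ℕ) [hp : Fact p.Prime] : (Ideal.span {(p : ℤ)}).IsPrime := by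
  rw [Ideal.span_singleton_prime (by exact_mod_cast hp.out.ne_zero)]
  exact Nat.prime_iff_prime_int.mp hp.out

/-- `Z_(p)`: the localization of `ℤ` at the prime ideal `(p)`. -/
abbrev Zp (p : ℕ) [Fact p.Prime] : Type :=
  Localization.AtPrime (Ideal.span {(p : ℤ)})

/-!
Write `ℓᵢ - 1 = aᵢ`, so that the relations read `xᵢ (xᵢ - aᵢ) = 0` and `∏ xᵢ = 0`. Modulo them,
`xᵢ · x^S` is `aᵢ x^S` when `i ∈ S` and `x^(S ∪ {i})` otherwise, so the square-free monomials `x^S`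
with `S` a proper subset of the variables span the quotient. They are independent: evaluating at
the point with `xᵢ = aᵢ` for `i ∈ T` and `xᵢ = 0` otherwise kills the ideal when `T` is proper and
sends `x^S` to `[S ⊆ T] · ∏_{i ∈ S} aᵢ`, so a relation `∑ g_S x^S = 0` yields
`∑_{S ⊆ T} g_S ∏_{i ∈ S} aᵢ = 0` for every proper `T`, and induction on `T` gives `g_T = 0`
as soon as the `aᵢ` are non-zero-divisors.
-/

theorem MvPolynomial.smul_mk_eq_mk_C_mul {A σ : Type*} [CommRing A]
    (I : Ideal (MvPolynomial σ A)) (c : A) (f : MvPolynomial σ A) :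
    c • Ideal.Quotient.mk I f = Ideal.Quotient.mk I (C c * f) := by
  rw [← smul_eq_C_mul]
  rfl

section ProdQuadQuotient

variable {A σ : Type*} [CommRing A] [Fintype σ] (a : σ → A)

noncomputable def prodQuadIdeal : Ideal (MvPolynomial σ A) :=
  Ideal.span (insert (∏ i, X i) (Set.range fun i => X i * (X i - C (a i))))

local notation "π" => Ideal.Quotient.mk (prodQuadIdeal a)

theorem prod_X_mem_prodQuadIdeal : (∏ i, X i : MvPolynomial σ A) ∈ prodQuadIdeal a :=
  Ideal.subset_span (Set.mem_insert _ _)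

theorem X_mul_X_sub_C_mem_prodQuadIdeal (i : σ) :
    (X i * (X i - C (a i)) : MvPolynomial σ A) ∈ prodQuadIdeal a :=
  Ideal.subset_span (Set.mem_insert_of_mem _ ⟨i, rfl⟩)

variable [DecidableEq σ]

noncomputable def subsetMonomial (S : {S : Finset σ // S ≠ Finset.univ}) :
    MvPolynomial σ A ⧸ prodQuadIdeal a :=
  π (∏ i ∈ S.1, X i)

theorem mk_X_mul_prod_X_of_mem {i : σ} {S : Finset σ} (hi : i ∈ S) :
    π (X i * ∏ j ∈ S, X j) = a i • π (∏ j ∈ S, X j) := by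
  rw [smul_mk_eq_mk_C_mul, Ideal.Quotient.mk_eq_mk_iff_sub_mem]
  have h : (X i * ∏ j ∈ S, X j : MvPolynomial σ A) - C (a i) * ∏ j ∈ S, X j
      = X i * (X i - C (a i)) * ∏ j ∈ S.erase i, X j := by
    rw [← Finset.mul_prod_erase S _ hi]
    ring
  rw [h]
  exact Ideal.mul_mem_right _ _ (X_mul_X_sub_C_mem_prodQuadIdeal a i)

theorem mk_prod_X_mem_span (S : Finset σ) :
    π (∏ i ∈ S, X i) ∈ Submodule.span A (Set.range (subsetMonomial a)) := by
  by_cases hS : S = Finset.univ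
  · rw [hS, Ideal.Quotient.eq_zero_iff_mem.mpr (prod_X_mem_prodQuadIdeal a)]
    exact Submodule.zero_mem _
  · exact Submodule.subset_span ⟨⟨S, hS⟩, rfl⟩

theorem mk_X_mul_mem_span (i : σ) {q : MvPolynomial σ A ⧸ prodQuadIdeal a}
    (hq : q ∈ Submodule.span A (Set.range (subsetMonomial a))) :
    π (X i) * q ∈ Submodule.span A (Set.range (subsetMonomial a)) := by
  induction hq using Submodule.span_induction with
  | mem x hx =>
    obtain ⟨⟨S, hS⟩, rfl⟩ := hx
    rw [subsetMonomial, ← map_mul]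
    by_cases hi : i ∈ S
    · rw [mk_X_mul_prod_X_of_mem a hi]
      exact Submodule.smul_mem _ _ (Submodule.subset_span ⟨⟨S, hS⟩, rfl⟩)
    · rw [← Finset.prod_insert hi]
      exact mk_prod_X_mem_span a _
  | zero => rw [mul_zero]; exact Submodule.zero_mem _
  | add x y _ _ hx hy => rw [mul_add]; exact Submodule.add_mem _ hx hy
  | smul c x _ hx => rw [mul_smul_comm]; exact Submodule.smul_mem _ _ hx

theorem span_subsetMonomial_eq_top : Submodule.span A (Set.range (subsetMonomial a)) = ⊤ := by
  refine Submodule.eq_top_iff'.mpr fun q => ?_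
  obtain ⟨f, rfl⟩ := Ideal.Quotient.mk_surjective q
  induction f using MvPolynomial.induction_on with
  | C c =>
    have h := Submodule.smul_mem _ c (mk_prod_X_mem_span a ∅)
    rwa [smul_mk_eq_mk_C_mul, Finset.prod_empty, mul_one] at h
  | add f g hf hg => rw [map_add]; exact Submodule.add_mem _ hf hg
  | mul_X f i hf => rw [map_mul, mul_comm]; exact mk_X_mul_mem_span a i hf

def restrictTo (T : Finset σ) (i : σ) : A :=
  if i ∈ T then a i else 0

theorem prodQuadIdeal_le_ker_aeval_restrictTo {T : Finset σ} (hT : T ≠ Finset.univ) :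
    prodQuadIdeal a ≤ RingHom.ker (aeval (restrictTo a T)) := by
  rw [prodQuadIdeal, Ideal.span_le]
  rintro f (rfl | ⟨i, rfl⟩) <;>
    simp only [SetLike.mem_coe, RingHom.mem_ker, map_prod, map_mul, map_sub, aeval_X, aeval_C,
      Algebra.algebraMap_self, RingHom.id_apply, restrictTo]
  · obtain ⟨i, -, hi⟩ := Finset.exists_of_ssubset (Finset.ssubset_univ_iff.mpr hT)
    exact Finset.prod_eq_zero (Finset.mem_univ i) (if_neg hi)
  · split_ifs <;> ring

omit [Fintype σ] in
theorem aeval_restrictTo_prod_X (S T : Finset σ) :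
    aeval (restrictTo a T) (∏ i ∈ S, X i : MvPolynomial σ A) =
      if S ⊆ T then ∏ i ∈ S, a i else 0 := by
  simp only [map_prod, aeval_X, restrictTo]
  split_ifs with hST
  · exact Finset.prod_congr rfl fun i hi => if_pos (hST hi)
  · obtain ⟨i, hiS, hiT⟩ := Finset.not_subset.mp hST
    exact Finset.prod_eq_zero hiS (if_neg hiT)

theorem linearIndependent_subsetMonomial (ha : ∀ i, a i ∈ nonZeroDivisors A) :
    LinearIndependent A (subsetMonomial a) := by
  refine Fintype.linearIndependent_iff.mpr fun g hg => ?_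
  have hmem : ∑ S, C (g S) * ∏ i ∈ S.1, X i ∈ prodQuadIdeal a := by
    rw [← Ideal.Quotient.eq_zero_iff_mem, map_sum, ← hg]
    exact Finset.sum_congr rfl fun S _ => (smul_mk_eq_mk_C_mul _ _ _).symm
  have heval (T : Finset σ) (hT : T ≠ Finset.univ) :
      ∑ S : {S : Finset σ // S ≠ Finset.univ},
        (if S.1 ⊆ T then g S * ∏ i ∈ S.1, a i else 0) = 0 := by
    have h := prodQuadIdeal_le_ker_aeval_restrictTo a hT hmem
    rw [RingHom.mem_ker, map_sum] at h
    refine Eq.trans (Finset.sum_congr rfl fun S _ => ?_) h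
    rw [map_mul, aeval_C, aeval_restrictTo_prod_X, mul_ite, mul_zero]
    rfl
  rintro ⟨T, hT⟩
  induction T using Finset.strongInduction with
  | H T ih =>
    have h := heval T hT
    rw [Finset.sum_eq_single_of_mem ⟨T, hT⟩ (Finset.mem_univ _), if_pos subset_rfl] at h
    · exact (mul_right_mem_nonZeroDivisors_eq_zero_iff (prod_mem fun i _ => ha i)).mp h
    · rintro ⟨S, hS⟩ _ hne
      split_ifs with hST
      · rw [ih S (hST.ssubset_of_ne fun h => hne (Subtype.ext h)) hS, zero_mul]
      · rfl

noncomputable def subsetMonomialBasis (ha : ∀ i, a i ∈ nonZeroDivisors A) :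
    Module.Basis {S : Finset σ // S ≠ Finset.univ} A (MvPolynomial σ A ⧸ prodQuadIdeal a) :=
  Module.Basis.mk (linearIndependent_subsetMonomial a ha) (span_subsetMonomial_eq_top a).ge

theorem card_finset_ne_univ :
    Fintype.card {S : Finset σ // S ≠ Finset.univ} = 2 ^ Fintype.card σ - 1 := by
  rw [Fintype.card_subtype_compl, Fintype.card_subtype_eq, Fintype.card_finset]

theorem free_and_finrank_prodQuadIdeal [Nontrivial A] (ha : ∀ i, a i ∈ nonZeroDivisors A) :
    Module.Free A (MvPolynomial σ A ⧸ prodQuadIdeal a) ∧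
      Module.finrank A (MvPolynomial σ A ⧸ prodQuadIdeal a) = 2 ^ Fintype.card σ - 1 :=
  ⟨.of_basis (subsetMonomialBasis a ha),
    (Module.finrank_eq_card_basis (subsetMonomialBasis a ha)).trans card_finset_ne_univ⟩

end ProdQuadQuotient

theorem stmt1_general (p : ℕ) [Fact p.Prime] (r : ℕ)
    (ℓ : Fin r → ℕ) (hℓ : ∀ i, (ℓ i).Prime) :
    Module.Free (Zp p)
      (MvPolynomial (Fin r) (Zp p) ⧸
        (Ideal.span (insert (∏ i : Fin r, X i)
          (Set.range fun i : Fin r => X i * (X i + 1 - C ((ℓ i : Zp p))))) :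
            Ideal (MvPolynomial (Fin r) (Zp p)))) ∧
    Module.finrank (Zp p)
      (MvPolynomial (Fin r) (Zp p) ⧸
        (Ideal.span (insert (∏ i : Fin r, X i)
          (Set.range fun i : Fin r => X i * (X i + 1 - C ((ℓ i : Zp p))))) :
            Ideal (MvPolynomial (Fin r) (Zp p)))) =
      2 ^ r - 1 := by
  have hideal : Ideal.span (insert (∏ i : Fin r, X i)
      (Set.range fun i : Fin r => X i * (X i + 1 - C ((ℓ i : Zp p)))))
      = prodQuadIdeal fun i => (ℓ i - 1 : Zp p) := by
    simp only [prodQuadIdeal, map_sub, map_one, sub_sub_eq_add_sub]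
  have ha (i : Fin r) : (ℓ i - 1 : Zp p) ∈ nonZeroDivisors (Zp p) := by
    have h : ((ℓ i - 1 : ℤ) : Zp p) ≠ 0 := by
      rw [← eq_intCast (algebraMap ℤ (Zp p)), Ne, IsLocalization.to_map_eq_zero_iff (Zp p)
        (Ideal.span {(p : ℤ)}).primeCompl_le_nonZeroDivisors]
      have := (hℓ i).two_le
      omega
    exact mem_nonZeroDivisors_of_ne_zero (by exact_mod_cast h)
  rw [hideal]
  simpa only [Fintype.card_fin] using free_and_finrank_prodQuadIdeal _ ha

theorem stmt1 (p : ℕ) [Fact p.Prime] (r : ℕ) (hr : 1 ≤ r)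
    (ℓ : Fin r → ℕ) (hℓ : ∀ i, (ℓ i).Prime) :
    Module.Free (Zp p)
      (MvPolynomial (Fin r) (Zp p) ⧸
        (Ideal.span (insert (∏ i : Fin r, X i)
          (Set.range fun i : Fin r => X i * (X i + 1 - C ((ℓ i : Zp p))))) :
            Ideal (MvPolynomial (Fin r) (Zp p)))) ∧
    Module.finrank (Zp p)
      (MvPolynomial (Fin r) (Zp p) ⧸
        (Ideal.span (insert (∏ i : Fin r, X i)
          (Set.range fun i : Fin r => X i * (X i + 1 - C ((ℓ i : Zp p))))) :
            Ideal (MvPolynomial (Fin r) (Zp p)))) =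
      2 ^ r - 1 :=
  stmt1_general p r ℓ hℓ
end

section
/- Let p be a prime number, Z_(p) the localization of the integers at the prime p, let r ≥ 1, and let ℓ_1, …, ℓ_r be prime numbers. Let R = Z_(p)[x_1, …, x_r], let I' ⊆ R be the ideal generated by x_i·(x_i + 1 − ℓ_i) for i = 1, …, r, and let m̄ denote the image of the monomial x_1·x_2⋯x_r in the quotient ring R/I'. Then the ideal of R/I' generated by m̄ is equal to the Z_(p)-submodule of R/I' spanned by the single element m̄, and this submodule is a direct summand of R/I' as a Z_(p)-module. -/
set_option synthInstance.maxHeartbeats 800000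
set_option maxHeartbeats 1000000
open MvPolynomial

/-!
Modulo the relations `xᵢ² = cᵢ xᵢ` (here `cᵢ = ℓᵢ - 1`) every variable acts on `m̄ = x₁⋯x_r` as
the scalar `cᵢ`, so the ideal generated by `m̄` is the line it spans over the base ring. That line
splits off: the quotient is free on the squarefree monomials, and the coefficient of the top one
in the normal form, `∑_d a_d ∏ᵢ [dᵢ ≥ 1] cᵢ^(dᵢ - 1)`, is a functional vanishing on the
relations and sending `m̄` to `1`.
-/

theorem Ideal.restrictScalars_span_singleton_eq_of_adjoin_eq_top
    {R A : Type*} [CommRing R] [CommRing A] [Algebra R A] {s : Set A}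
    (hs : Algebra.adjoin R s = ⊤) {m : A} (hm : ∀ x ∈ s, x * m ∈ R ∙ m) :
    (Ideal.span {m}).restrictScalars R = R ∙ m := by
  have hmul (a : A) : a * m ∈ R ∙ m := by
    have ha : a ∈ Algebra.adjoin R s := hs ▸ Algebra.mem_top
    induction ha using Algebra.adjoin_induction with
    | mem x hx => exact hm x hx
    | algebraMap r =>
      rw [← Algebra.smul_def]; exact Submodule.smul_mem _ r (Submodule.mem_span_singleton_self m)
    | add x y _ _ hx hy => rw [add_mul]; exact add_mem hx hy
    | mul x y _ _ hx hy =>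
      obtain ⟨t, ht⟩ := Submodule.mem_span_singleton.mp hy
      rw [mul_assoc, ← ht, mul_smul_comm]
      exact Submodule.smul_mem _ t hx
  refine le_antisymm (fun y hy => ?_) (Submodule.span_le.mpr (by simp))
  obtain ⟨a, rfl⟩ := Ideal.mem_span_singleton'.mp hy
  exact hmul a

theorem LinearMap.isCompl_span_singleton_ker {R M : Type*} [CommRing R] [AddCommGroup M]
    [Module R M] {f : M →ₗ[R] R} {m : M} (hfm : f m = 1) :
    IsCompl (R ∙ m) (LinearMap.ker f) := by
  have hproj := LinearMap.isCompl_of_proj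
    (f := LinearMap.toSpanSingleton R _ ⟨m, Submodule.mem_span_singleton_self m⟩ ∘ₗ f) <| by
      rintro ⟨x, hx⟩
      obtain ⟨a, rfl⟩ := Submodule.mem_span_singleton.mp hx
      ext; simp [hfm]
  convert hproj using 1
  ext x
  simp only [LinearMap.mem_ker, LinearMap.comp_apply, LinearMap.toSpanSingleton_apply]
  constructor
  · intro h; simp [h]
  · intro h
    simpa [hfm] using congrArg (fun y : R ∙ m => f y) h

namespace MvPolynomial

noncomputable section

variable {R σ : Type*} [CommRing R] [Fintype σ] (c : σ → R)

def quadraticRelations : Ideal (MvPolynomial σ R) :=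
  Ideal.span (Set.range fun i => X i * (X i - C (c i)))

def topWeight (d : σ →₀ ℕ) : R :=
  ∏ i, if d i = 0 then 0 else c i ^ (d i - 1)

theorem topWeight_add_single_two (d : σ →₀ ℕ) (i : σ) :
    topWeight c (d + Finsupp.single i 2) = c i * topWeight c (d + Finsupp.single i 1) := by
  classical
  simp only [topWeight, Finsupp.add_apply, ← Finset.mul_prod_erase _ _ (Finset.mem_univ i)]
  rw [← mul_assoc]
  congr 1
  · simp [pow_succ, mul_comm]
  · refine Finset.prod_congr rfl fun j hj => ?_
    simp [(Finset.ne_of_mem_erase hj).symm]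

def topCoeff : MvPolynomial σ R →ₗ[R] R :=
  Finsupp.linearCombination R (topWeight c) ∘ₗ (AddMonoidAlgebra.coeffLinearEquiv R).toLinearMap

theorem topCoeff_monomial (d : σ →₀ ℕ) (a : R) :
    topCoeff c (monomial d a) = a * topWeight c d := by
  rw [← smul_eq_mul, topCoeff, LinearMap.comp_apply]
  exact Finsupp.linearCombination_single ..

theorem topCoeff_mul_X_mul_X_sub_C (f : MvPolynomial σ R) (i : σ) :
    topCoeff c (f * (X i * (X i - C (c i)))) = 0 := by
  induction f using MvPolynomial.induction_on' with
  | monomial d a =>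
    have : monomial d a * (X i * (X i - C (c i)))
        = monomial (d + Finsupp.single i 2) a - monomial (d + Finsupp.single i 1) (a * c i) := by
      rw [show X i * (X i - C (c i)) = X i ^ 2 - C (c i) * X i ^ 1 by ring, mul_sub,
        X_pow_eq_monomial, X_pow_eq_monomial, C_mul_monomial, monomial_mul, monomial_mul,
        mul_one, mul_one]
    rw [this, map_sub, topCoeff_monomial, topCoeff_monomial, topWeight_add_single_two]
    ring
  | add f g hf hg => rw [add_mul, map_add, hf, hg, add_zero]

theorem quadraticRelations_le_ker_topCoeff :
    (quadraticRelations c).restrictScalars R ≤ LinearMap.ker (topCoeff c) := by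
  intro x hx
  obtain ⟨f, rfl⟩ := (Ideal.mem_span_range_iff_exists_fun).mp hx
  simp [map_sum, topCoeff_mul_X_mul_X_sub_C]

theorem topCoeff_prod_X : topCoeff c (∏ i, X i : MvPolynomial σ R) = 1 := by
  rw [show (∏ i, X i : MvPolynomial σ R) = monomial (∑ i, Finsupp.single i 1) 1 by
    rw [monomial_sum_one]; rfl, topCoeff_monomial, one_mul, topWeight]
  simp [Finsupp.finsetSum_apply]

def topCoeffQuot : (MvPolynomial σ R ⧸ quadraticRelations c) →ₗ[R] R :=
  ((quadraticRelations c).restrictScalars R).liftQ (topCoeff c)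
      (quadraticRelations_le_ker_topCoeff c) ∘ₗ
    (Submodule.Quotient.restrictScalarsEquiv R (quadraticRelations c)).symm.toLinearMap

theorem topCoeffQuot_mk (f : MvPolynomial σ R) :
    topCoeffQuot c (Ideal.Quotient.mk (quadraticRelations c) f) = topCoeff c f :=
  rfl

theorem mk_X_mul_mk_prod_X (i : σ) :
    Ideal.Quotient.mk (quadraticRelations c) (X i) * Ideal.Quotient.mk _ (∏ j, X j)
      = c i • Ideal.Quotient.mk (quadraticRelations c) (∏ j, X j) := by
  classical
  rw [← Ideal.Quotient.mkₐ_eq_mk R, ← map_smul, ← map_mul, Ideal.Quotient.mkₐ_eq_mk,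
    Ideal.Quotient.eq, smul_eq_C_mul, ← sub_mul, ← Finset.mul_prod_erase _ _ (Finset.mem_univ i),
    ← mul_assoc, ← mul_comm (X i)]
  exact Ideal.mul_mem_right _ _ (Ideal.subset_span ⟨i, rfl⟩)

theorem restrictScalars_span_mk_prod_X :
    (Ideal.span {Ideal.Quotient.mk (quadraticRelations c) (∏ i, X i)}).restrictScalars R
      = R ∙ Ideal.Quotient.mk (quadraticRelations c) (∏ i, X i) := by
  refine Ideal.restrictScalars_span_singleton_eq_of_adjoin_eq_top
    (s := Set.range fun i => Ideal.Quotient.mk _ (X i)) ?_ ?_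
  · rw [Set.range_comp', ← Ideal.Quotient.mkₐ_eq_mk R, Algebra.adjoin_image, adjoin_range_X,
      Algebra.map_top, AlgHom.range_eq_top]
    exact Ideal.Quotient.mkₐ_surjective R _
  · rintro _ ⟨i, rfl⟩
    rw [mk_X_mul_mk_prod_X]
    exact Submodule.smul_mem _ _ (Submodule.mem_span_singleton_self _)

theorem isCompl_span_mk_prod_X_ker_topCoeffQuot :
    IsCompl (R ∙ Ideal.Quotient.mk (quadraticRelations c) (∏ i, X i))
      (LinearMap.ker (topCoeffQuot c)) :=
  LinearMap.isCompl_span_singleton_ker (by rw [topCoeffQuot_mk, topCoeff_prod_X])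

end

end MvPolynomial

theorem stmt2_general (p : ℕ) [Fact p.Prime] (r : ℕ)
    (ℓ : Fin r → ℕ)
    (I' : Ideal (MvPolynomial (Fin r) (Zp p)))
    (hI' : I' = Ideal.span (Set.range fun i : Fin r =>
      X i * (X i + 1 - C ((ℓ i : Zp p)))))
    (m : MvPolynomial (Fin r) (Zp p) ⧸ I')
    (hm : m = Ideal.Quotient.mk I' (∏ i : Fin r, X i)) :
    Submodule.restrictScalars (Zp p) (Ideal.span {m}) = Submodule.span (Zp p) {m} ∧
    ∃ N : Submodule (Zp p) (MvPolynomial (Fin r) (Zp p) ⧸ I'),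
      IsCompl (Submodule.span (Zp p) {m}) N := by
  have hrel : I' = quadraticRelations fun i => (ℓ i : Zp p) - 1 := by
    rw [hI', quadraticRelations]
    congr! 3 with i
    rw [map_sub, map_one]
    ring
  subst hrel hm
  exact ⟨restrictScalars_span_mk_prod_X _, _, isCompl_span_mk_prod_X_ker_topCoeffQuot _⟩

theorem stmt2 (p : ℕ) [Fact p.Prime] (r : ℕ) (hr : 1 ≤ r)
    (ℓ : Fin r → ℕ) (hℓ : ∀ i, (ℓ i).Prime)
    (I' : Ideal (MvPolynomial (Fin r) (Zp p)))
    (hI' : I' = Ideal.span (Set.range fun i : Fin r =>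
      X i * (X i + 1 - C ((ℓ i : Zp p)))))
    (m : MvPolynomial (Fin r) (Zp p) ⧸ I')
    (hm : m = Ideal.Quotient.mk I' (∏ i : Fin r, X i)) :
    Submodule.restrictScalars (Zp p) (Ideal.span {m}) = Submodule.span (Zp p) {m} ∧
    ∃ N : Submodule (Zp p) (MvPolynomial (Fin r) (Zp p) ⧸ I'),
      IsCompl (Submodule.span (Zp p) {m}) N :=
  stmt2_general p r ℓ I' hI' m hm
end

section
/- Let A be a commutative ring and let M be an A-module whose underlying set is finite. Then the character module M^∨ = Hom_ℤ(M, ℚ/ℤ), with its natural A-module structure given by (a·φ)(x) = φ(a·x), is a cyclic A-module if and only if for every maximal ideal m of A, the m-torsion submodule M[m] = {x ∈ M : a·x = 0 for all a ∈ m} is a cyclic A-module (equivalently, M[m] has dimension at most 1 as a vector space over the field A/m). -/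
/-!
Put `N = M^∨`. By the structure theorem for finite abelian groups `|N| = |M|`, so evaluation
`M → N^∨` is an isomorphism. A finite `A`-module `N` is cyclic as soon as every `N / mN` is: the
annihilator of a simple quotient `N / P` is a maximal ideal `m` with `mN ≤ P`, and the Chinese
remainder theorem glues generators modulo the finitely many such `m` into one element lying in no
maximal submodule. Finally `(N / mN)^∨ ≅ N^∨[m] ≅ M[m]`, so the `A/m`-vector spaces `N / mN` and
`M[m]` have the same cardinality, hence the same dimension, and one is cyclic iff the other is.
-/

open Function Submodule

namespace AddCircle

variable {𝕜 : Type*} [Field 𝕜] [LinearOrder 𝕜] [IsStrictOrderedRing 𝕜] (p : 𝕜) [Fact (0 < p)]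

theorem nsmul_eq_zero_iff_mem_zmultiples {n : ℕ} (hn : 0 < n) {u : AddCircle p} :
    n • u = 0 ↔ u ∈ AddSubgroup.zmultiples ((p / n : 𝕜) : AddCircle p) := by
  rw [AddSubgroup.mem_zmultiples_iff]
  constructor
  · rw [AddCircle.nsmul_eq_zero_iff hn]
    rintro ⟨m, -, rfl⟩
    refine ⟨m, ?_⟩
    rw [natCast_zsmul, ← coe_nsmul, nsmul_eq_mul]
    congr 1
    ring
  · rintro ⟨k, rfl⟩
    rw [smul_comm, ← coe_nsmul, nsmul_eq_mul, mul_div_cancel₀ _ (by positivity), coe_period,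
      smul_zero]

theorem natCard_nsmul_eq_zero {n : ℕ} (hn : 0 < n) :
    Nat.card {u : AddCircle p // n • u = 0} = n := by
  rw [Nat.card_congr (Equiv.subtypeEquivRight fun u => nsmul_eq_zero_iff_mem_zmultiples p hn)]
  exact (Nat.card_zmultiples _).trans (addOrderOf_period_div hn)

end AddCircle

instance {R M : Type*} [Ring R] [AddCommGroup M] [Module R M] [Finite M] (p : Submodule R M) :
    Finite (M ⧸ p) :=
  .of_surjective _ p.mkQ_surjective

namespace CharacterModule

theorem natCard_zmod (n : ℕ) [NeZero n] : Nat.card (CharacterModule (ZMod n)) = n :=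
  calc Nat.card (CharacterModule (ZMod n))
      = Nat.card {f : ℤ →+ AddCircle (1 : ℚ) // f n = 0} := Nat.card_congr (ZMod.lift n).symm
    _ = Nat.card {u : AddCircle (1 : ℚ) // n • u = 0} :=
      Nat.card_congr <| Equiv.subtypeEquiv (zmultiplesHom _).symm fun f => by
        rw [zmultiplesHom_symm_apply, ← map_nsmul, nsmul_one]
    _ = n := AddCircle.natCard_nsmul_eq_zero 1 (NeZero.pos n)

theorem natCard_eq (G : Type*) [AddCommGroup G] [Finite G] :
    Nat.card (CharacterModule G) = Nat.card G := by
  classical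
  obtain ⟨ι, _, n, hn, ⟨e⟩⟩ := AddCommGroup.equiv_directSum_zmod_of_finite' G
  have (i : ι) : NeZero (n i) := ⟨by grind⟩
  calc Nat.card (CharacterModule G)
      = Nat.card (∀ i, CharacterModule (ZMod (n i))) :=
        Nat.card_congr <|
          (congr e.toIntLinearEquiv).toEquiv.trans DFinsupp.liftAddHom.symm.toEquiv
    _ = Nat.card (∀ i, ZMod (n i)) := by simp only [Nat.card_pi, natCard_zmod, Nat.card_zmod]
    _ = Nat.card G := Nat.card_congr (e.toEquiv.trans DFinsupp.equivFunOnFintype).symm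

instance {G : Type*} [AddCommGroup G] [Finite G] : Finite (CharacterModule G) :=
  Nat.finite_of_card_ne_zero <| by rw [natCard_eq]; exact Nat.card_pos.ne'

variable {A : Type*} [CommRing A] {M : Type*} [AddCommGroup M] [Module A M]

variable (A M) in
def eval : M →ₗ[A] CharacterModule (CharacterModule M) where
  toFun x := AddMonoidHom.eval x
  map_add' x y := by ext φ; exact map_add φ x y
  map_smul' a x := rfl

theorem eval_injective : Injective (eval A M) :=
  injective_iff_map_eq_zero _ |>.mpr fun _ hx => eq_zero_of_character_apply fun φ => congr($hx φ)

variable (A M) in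
noncomputable def evalEquiv [Finite M] : M ≃ₗ[A] CharacterModule (CharacterModule M) :=
  .ofBijective (eval A M) <| (Nat.bijective_iff_injective_and_card _).mpr
    ⟨eval_injective, by rw [natCard_eq, natCard_eq]⟩

theorem mem_torsionBySet_iff {I : Ideal A} {φ : CharacterModule M} :
    φ ∈ torsionBySet A (CharacterModule M) I ↔ ∀ x ∈ I • (⊤ : Submodule A M), φ x = 0 := by
  rw [Submodule.mem_torsionBySet_iff]
  constructor
  · intro h x hx
    refine smul_induction_on hx (fun a ha y _ => congr($(h ⟨a, ha⟩) y)) fun y z hy hz => ?_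
    rw [map_add, hy, hz, add_zero]
  · intro h a
    ext x
    exact h _ (smul_mem_smul a.2 mem_top)

theorem natCard_quotient_smul_top (I : Ideal A) :
    Nat.card (CharacterModule (M ⧸ I • (⊤ : Submodule A M))) =
      Nat.card (torsionBySet A (CharacterModule M) I) := by
  let π := (I • (⊤ : Submodule A M)).mkQ.toAddMonoidHom
  refine Nat.card_congr <| (π.liftOfSurjective (mkQ_surjective _)).symm.trans <|
    Equiv.subtypeEquivRight fun φ => ?_
  refine Iff.trans ?_ (mem_torsionBySet_iff (φ := φ)).symm
  simp only [SetLike.le_def, AddMonoidHom.mem_ker, LinearMap.toAddMonoidHom_coe, mkQ_apply,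
    Quotient.mk_eq_zero, π]
  rfl

theorem _root_.LinearEquiv.natCard_torsionBySet {M' : Type*} [AddCommGroup M'] [Module A M']
    (e : M ≃ₗ[A] M') (s : Set A) :
    Nat.card (torsionBySet A M s) = Nat.card (torsionBySet A M' s) :=
  Nat.card_congr <| e.toEquiv.subtypeEquiv fun x => by
    simp [Submodule.mem_torsionBySet_iff, ← map_smul]

theorem natCard_quotient_smul_top_eq_natCard_torsionBySet [Finite M] (I : Ideal A) :
    Nat.card (CharacterModule M ⧸ I • (⊤ : Submodule A (CharacterModule M))) =
      Nat.card (torsionBySet A M I) := by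
  rw [← natCard_eq, natCard_quotient_smul_top, (evalEquiv A M).natCard_torsionBySet]

end CharacterModule

theorem Module.finrank_eq_of_natCard_eq {K V W : Type*} [Field K] [AddCommGroup V] [Module K V]
    [AddCommGroup W] [Module K W] [Finite V] [Finite W] (h : Nat.card V = Nat.card W) :
    finrank K V = finrank K W := by
  rcases finite_or_infinite K with hK | hK
  · have : Module.Finite K V := .of_finite
    have : Module.Finite K W := .of_finite
    rw [natCard_eq_pow_finrank (K := K), natCard_eq_pow_finrank (K := K) (V := W)] at h
    exact Nat.pow_right_injective Finite.one_lt_card h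
  · have : Subsingleton V :=
      not_nontrivial_iff_subsingleton.mp fun _ => have := Module.Free.infinite K V; not_finite V
    have : Subsingleton W :=
      not_nontrivial_iff_subsingleton.mp fun _ => have := Module.Free.infinite K W; not_finite W
    rw [finrank_zero_of_subsingleton, finrank_zero_of_subsingleton]

theorem Module.IsTorsionBySet.isPrincipal_iff_of_natCard_eq {A : Type*} [CommRing A] {m : Ideal A}
    [m.IsMaximal] {V W : Type*} [AddCommGroup V] [Module A V] [AddCommGroup W] [Module A W]
    [Finite V] [Finite W] (hV : IsTorsionBySet A V m) (hW : IsTorsionBySet A W m)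
    (h : Nat.card V = Nat.card W) : IsPrincipal A V ↔ IsPrincipal A W := by
  let := Ideal.Quotient.field m
  let := hV.module
  let := hW.module
  have := hV.isScalarTower (S := A)
  have := hW.isScalarTower (S := A)
  let e : V ≃ₗ[A ⧸ m] W := .ofFinrankEq V W (finrank_eq_of_natCard_eq h)
  exact (e.restrictScalars A).isPrincipal_iff

namespace Module

variable {A N : Type*} [CommRing A] [AddCommGroup N] [Module A N]

theorem isPrincipal_iff_exists_span_singleton_eq_top :
    IsPrincipal A N ↔ ∃ x : N, span A {x} = ⊤ :=
  (Submodule.isPrincipal_iff ⊤).trans <| exists_congr fun _ => eq_comm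

theorem isPrincipal_quotient_iff {p : Submodule A N} :
    IsPrincipal A (N ⧸ p) ↔ ∃ x : N, span A {x} ⊔ p = ⊤ := by
  simp_rw [isPrincipal_iff_exists_span_singleton_eq_top, p.mkQ_surjective.exists, sup_comm,
    ← map_mkQ_eq_top, map_span, Set.image_singleton]

theorem _root_.Submodule.exists_forall_sub_mem_smul_top {ι : Type*} [Finite ι] {I : ι → Ideal A}
    (hI : Pairwise (IsCoprime on I)) (φ : ι → N) :
    ∃ x : N, ∀ i, x - φ i ∈ I i • (⊤ : Submodule A N) := by
  classical
  have := Fintype.ofFinite ι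
  choose e he using fun i => Ideal.exists_forall_sub_mem_ideal hI (Pi.single i 1)
  refine ⟨∑ i, e i • φ i, fun j => ?_⟩
  have : ∑ i, e i • φ i - φ j = ∑ i, (e i - (Pi.single i 1 : ι → A) j) • φ i := by
    simp [sub_smul, Finset.sum_sub_distrib, Pi.single_apply]
  rw [this]
  exact sum_mem fun i _ => smul_mem_smul (he i j) mem_top

theorem isPrincipal_of_forall_isMaximal [Finite N]
    (h : ∀ m : Ideal A, m.IsMaximal → IsPrincipal A (N ⧸ m • (⊤ : Submodule A N))) :
    IsPrincipal A N := by
  -- finite, as `N` has only finitely many submodules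
  let S := Set.range fun P : {P : Submodule A N // IsCoatom P} => annihilator A (N ⧸ P.1)
  have hS (m : S) : (m : Ideal A).IsMaximal := by
    obtain ⟨_, ⟨P, hP⟩, rfl⟩ := m
    have := isSimpleModule_iff_isCoatom.mpr hP
    exact IsSimpleModule.annihilator_isMaximal
  choose φ hφ using fun m : S => isPrincipal_quotient_iff.mp (h m (hS m))
  have hcoprime : Pairwise (IsCoprime on fun m : S => (m : Ideal A)) := fun m m' hne =>
    have := hS m; have := hS m'; Ideal.isCoprime_of_isMaximal (Subtype.coe_ne_coe.mpr hne)
  obtain ⟨x, hx⟩ := exists_forall_sub_mem_smul_top hcoprime φ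
  refine isPrincipal_iff_exists_span_singleton_eq_top.mpr ⟨x, ?_⟩
  by_contra hx_top
  obtain ⟨P, hP, hxP⟩ := (eq_top_or_exists_le_coatom (span A {x})).resolve_left hx_top
  let m : S := ⟨_, ⟨P, hP⟩, rfl⟩
  have hmP : (m : Ideal A) • (⊤ : Submodule A N) ≤ P :=
    smul_le.mpr fun r hr n _ =>
      (Quotient.mk_eq_zero P).mp (mem_annihilator.mp hr (Submodule.Quotient.mk n))
  refine hP.1 (eq_top_iff.mpr ((hφ m).symm.le.trans (sup_le ?_ hmP)))
  rw [span_singleton_le_iff_mem]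
  simpa using sub_mem (hxP (mem_span_singleton_self x)) (hmP (hx m))

theorem isPrincipal_iff_forall_isMaximal [Finite N] :
    IsPrincipal A N ↔
      ∀ m : Ideal A, m.IsMaximal → IsPrincipal A (N ⧸ m • (⊤ : Submodule A N)) :=
  ⟨fun _ _ _ => .of_surjective _ (mkQ_surjective _), isPrincipal_of_forall_isMaximal⟩

end Module

theorem stmt4 (A : Type*) [CommRing A] (M : Type*)
    [AddCommGroup M] [Module A M] [Finite M] :
    (∃ φ : CharacterModule M, Submodule.span A {φ} = ⊤) ↔
      ∀ m : Ideal A, m.IsMaximal →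
        ∃ x : Submodule.torsionBySet A M (m : Set A),
          Submodule.span A {x} = ⊤ := by
  simp only [← Module.isPrincipal_iff_exists_span_singleton_eq_top]
  rw [Module.isPrincipal_iff_forall_isMaximal]
  refine forall₂_congr fun m _ => ?_
  exact (Module.isTorsionBySet_quotient_ideal_smul _ m).isPrincipal_iff_of_natCard_eq
    (torsionBySet_isTorsionBySet _)
    (CharacterModule.natCard_quotient_smul_top_eq_natCard_torsionBySet m)
end

section
/- Let d be a squarefree positive integer and let s be a positive divisor of d. Then Σ_{t} μ(d/t) · σ(d/t) · σ(t/s) = 1 if s = d and = 0 if s ≠ d, where the sum is over the positive divisors t of d that are divisible by s, μ is the Möbius function, and σ is the sum-of-divisors function. -/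
/-!
The convolution `F = (μ·σ) * σ` is multiplicative, and at a prime `p` it equals
`σ(p) + μ(p)σ(p) = 0`; hence `F` vanishes at every squarefree `m ≠ 1`. The sum in the theorem is
`F(d/s)`, after writing each `t` with `s ∣ t ∣ d` as `t = s·u` with `u ∣ d/s`.
-/

open ArithmeticFunction Finset

theorem ArithmeticFunction.IsMultiplicative.eq_zero_of_squarefree {R : Type*}
    [CommMonoidWithZero R] {f : ArithmeticFunction R} (hf : f.IsMultiplicative)
    (hprime : ∀ p, p.Prime → f p = 0) {m : ℕ} (hm : Squarefree m) (hm1 : m ≠ 1) : f m = 0 := by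
  obtain ⟨p, hp, hpm⟩ := Nat.exists_prime_and_dvd hm1
  rw [← hf.prod_primeFactors hm]
  exact prod_eq_zero (Nat.mem_primeFactors.2 ⟨hp, hpm, hm.ne_zero⟩) (hprime p hp)

section MoebiusTwist

variable {R : Type*} [CommRing R] {g : ArithmeticFunction R}

theorem ArithmeticFunction.pmul_moebius_mul_apply (g : ArithmeticFunction R) (m : ℕ) :
    (pmul (moebius : ArithmeticFunction R) g * g) m =
      ∑ u ∈ m.divisors, (moebius (m / u) : R) * g (m / u) * g u := by
  rw [mul_apply, Nat.sum_divisorsAntidiagonal' fun x y => pmul (moebius : ArithmeticFunction R) g x * g y]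
  simp only [pmul_apply, intCoe_apply]

theorem ArithmeticFunction.pmul_moebius_mul_apply_prime (hg : g.IsMultiplicative) {p : ℕ}
    (hp : p.Prime) : (pmul (moebius : ArithmeticFunction R) g * g) p = 0 := by
  rw [mul_apply, Nat.sum_divisorsAntidiagonal fun x y => pmul (moebius : ArithmeticFunction R) g x * g y,
    hp.divisors, sum_pair hp.one_lt.ne, Nat.div_self hp.pos, Nat.div_one]
  simp [pmul_apply, moebius_apply_prime hp, hg.map_one]

theorem ArithmeticFunction.sum_divisors_moebius_mul_of_squarefree (hg : g.IsMultiplicative)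
    {m : ℕ} (hm : Squarefree m) :
    ∑ u ∈ m.divisors, (moebius (m / u) : R) * g (m / u) * g u = if m = 1 then 1 else 0 := by
  have hF : (pmul (moebius : ArithmeticFunction R) g * g).IsMultiplicative :=
    (isMultiplicative_moebius.intCast.pmul hg).mul hg
  rw [← pmul_moebius_mul_apply]
  split_ifs with hm1
  · rw [hm1, hF.map_one]
  · exact hF.eq_zero_of_squarefree (fun _ hp => pmul_moebius_mul_apply_prime hg hp) hm hm1

end MoebiusTwist

theorem Nat.sum_divisors_mul_filter_dvd {M : Type*} [AddCommMonoid M] (f : ℕ → M) {s : ℕ}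
    (hs : s ≠ 0) (m : ℕ) :
    ∑ t ∈ (s * m).divisors with s ∣ t, f t = ∑ u ∈ m.divisors, f (s * u) := by
  have hs' : 0 < s := Nat.pos_of_ne_zero hs
  have himage : {t ∈ (s * m).divisors | s ∣ t} = m.divisors.image (s * ·) := by
    ext t
    simp only [mem_filter, Nat.mem_divisors, mem_image]
    constructor
    · rintro ⟨⟨htd, hsm⟩, u, rfl⟩
      exact ⟨u, ⟨(Nat.mul_dvd_mul_iff_left hs').1 htd, right_ne_zero_of_mul hsm⟩, rfl⟩
    · rintro ⟨u, ⟨hum, hm⟩, rfl⟩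
      exact ⟨⟨Nat.mul_dvd_mul_left s hum, mul_ne_zero hs hm⟩, dvd_mul_right s u⟩
  rw [himage, sum_image fun _ _ _ _ h => Nat.eq_of_mul_eq_mul_left hs' h]

theorem stmt8 (d s : ℕ) (hd : Squarefree d) (hs : 0 < s) (hsd : s ∣ d) :
    ∑ t ∈ d.divisors.filter (fun t => s ∣ t),
      (moebius (d / t) * (sigma 1 (d / t) : ℤ) * (sigma 1 (t / s) : ℤ)) =
      if s = d then 1 else 0 := by
  obtain ⟨m, rfl⟩ := hsd
  rw [Nat.sum_divisors_mul_filter_dvd _ hs.ne']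
  simp_rw [Nat.mul_div_mul_left _ _ hs, Nat.mul_div_cancel_left _ hs]
  have hσ : ((sigma 1 : ArithmeticFunction ℕ) : ArithmeticFunction ℤ).IsMultiplicative :=
    isMultiplicative_sigma.natCast
  have hsum := sum_divisors_moebius_mul_of_squarefree hσ hd.of_mul_right
  simp only [natCoe_apply, Int.cast_id] at hsum
  simp_rw [hsum, eq_comm (a := s), Nat.mul_eq_left hs.ne']
end
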